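/- The graph Γ₈ has exactly four graph automorphisms; its automorphism group is isomorphic to the Klein four-group ℤ/2 × ℤ/2, generated by the involution σ fixing v₁ and v₂ and swapping aᵢ with bᵢ for i = 1, 2, 3, and the involution τ given by a₁ ↔ a₂, b₁ ↔ b₂, a₃ ↔ b₃, v₁ ↔ v₂. -/

import Mathlib

/-- The vertices of the graph `Γ₈`. -/
inductive V8 : Type
  | v1 | v2 | a1 | a2 | a3 | b1 | b2 | b3
  deriving DecidableEq

open V8

/-- The graph `Γ₈`: the hexagonal cycle `a₁a₂a₃b₁b₂b₃a₁`, the chord `a₃b₃`,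
and the four edges `a₁v₁`, `v₁b₁`, `a₂v₂`, `v₂b₂`. -/
def Gamma8 : SimpleGraph V8 :=
  SimpleGraph.fromEdgeSet
    {s(a1, a2), s(a2, a3), s(a3, b1), s(b1, b2), s(b2, b3), s(b3, a1),
     s(a3, b3),
     s(a1, v1), s(v1, b1), s(a2, v2), s(v2, b2)}

/-- The involution `σ` of the vertex set of `Γ₈` fixing `v₁` and `v₂` and swapping `aᵢ`
with `bᵢ` for `i = 1, 2, 3`. -/
def sigma8 : V8 → V8
  | v1 => v1
  | v2 => v2
  | a1 => b1
  | a2 => b2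
  | a3 => b3
  | b1 => a1
  | b2 => a2
  | b3 => a3

/-- The involution `τ` of the vertex set of `Γ₈` given by `a₁ ↔ a₂`, `b₁ ↔ b₂`,
`a₃ ↔ b₃`, `v₁ ↔ v₂`. -/
def tau8 : V8 → V8
  | v1 => v2
  | v2 => v1
  | a1 => a2
  | a2 => a1
  | a3 => b3
  | b1 => b2
  | b2 => b1
  | b3 => a3

/-!
The two vertices of degree two, `v₁` and `v₂`, form a pair preserved by every automorphism, and
so do `a₃` and `b₃`, the vertices of degree three all of whose neighbours have degree three.
An automorphism fixing `v₁` and `a₃` fixes every other vertex, each being the unique common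
neighbour, or the unique remaining neighbour, of two vertices already fixed. So an automorphism
is determined by the pair `(φ v₁, φ a₃) ∈ {v₁, v₂} × {a₃, b₃}`; the four choices are realised
by `1`, `σ`, `τ`, `στ`, all involutions, so the automorphism group is a Klein four-group.
-/

open SimpleGraph

namespace SimpleGraph

variable {V : Type*} {G : SimpleGraph V}

def autOfInvolutive (f : V → V) (hf : Function.Involutive f)
    (hadj : ∀ x y, G.Adj (f x) (f y) ↔ G.Adj x y) : G ≃g G where
  toEquiv := hf.toPerm f
  map_rel_iff' := hadj _ _

namespace Iso

variable (φ : G ≃g G) {x y z : V}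

theorem apply_eq_self_of_unique_common_adj (hx : φ x = x) (hy : φ y = y)
    (hxz : G.Adj x z) (hyz : G.Adj y z) (huniq : ∀ w, G.Adj x w → G.Adj y w → w = z) :
    φ z = z :=
  huniq _ (hx ▸ φ.map_adj_iff.2 hxz) (hy ▸ φ.map_adj_iff.2 hyz)

theorem apply_eq_self_of_unique_adj_ne (hx : φ x = x) (hy : φ y = y)
    (hxz : G.Adj x z) (hzy : z ≠ y) (huniq : ∀ w, G.Adj x w → w ≠ y → w = z) :
    φ z = z :=
  huniq _ (hx ▸ φ.map_adj_iff.2 hxz) (hy ▸ φ.injective.ne hzy)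

end Iso

end SimpleGraph

instance : Fintype V8 :=
  .ofList [v1, v2, a1, a2, a3, b1, b2, b3] fun x => by cases x <;> decide

instance : DecidableRel Gamma8.Adj := fun _ _ => decidable_of_iff' _ (fromEdgeSet_adj _)

namespace Gamma8

theorem degree_eq_two_iff (x : V8) : Gamma8.degree x = 2 ↔ x = v1 ∨ x = v2 := by
  revert x; decide

theorem eq_a3_or_eq_b3_iff (x : V8) :
    x = a3 ∨ x = b3 ↔ Gamma8.degree x = 3 ∧ ∀ y, Gamma8.Adj x y → Gamma8.degree y = 3 := by
  revert x; decide

def sigmaAut : Gamma8 ≃g Gamma8 :=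
  autOfInvolutive sigma8 (fun x => by cases x <;> rfl) (by decide)

def tauAut : Gamma8 ≃g Gamma8 :=
  autOfInvolutive tau8 (fun x => by cases x <;> rfl) (by decide)

section

variable (φ : Gamma8 ≃g Gamma8)

theorem aut_apply_eq_v1_or_eq_v2 {x : V8} (hx : x = v1 ∨ x = v2) : φ x = v1 ∨ φ x = v2 := by
  rwa [← degree_eq_two_iff, φ.degree_eq, degree_eq_two_iff]

theorem aut_apply_eq_a3_or_eq_b3 {x : V8} (hx : x = a3 ∨ x = b3) : φ x = a3 ∨ φ x = b3 := by
  rw [eq_a3_or_eq_b3_iff] at hx ⊢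
  refine ⟨by rw [φ.degree_eq, hx.1], fun y hy => ?_⟩
  obtain ⟨y, rfl⟩ := φ.surjective y
  rw [φ.degree_eq]
  exact hx.2 y (φ.map_adj_iff.1 hy)

theorem aut_eq_one_of_fix_v1_a3 (h1 : φ v1 = v1) (h3 : φ a3 = a3) : φ = 1 := by
  have hv2 : φ v2 = v2 := (aut_apply_eq_v1_or_eq_v2 φ (.inr rfl)).resolve_left fun h =>
    nomatch φ.injective (h.trans h1.symm)
  have hb3 : φ b3 = b3 := (aut_apply_eq_a3_or_eq_b3 φ (.inr rfl)).resolve_left fun h =>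
    nomatch φ.injective (h.trans h3.symm)
  have hb1 : φ b1 = b1 :=
    φ.apply_eq_self_of_unique_common_adj h3 h1 (by decide) (by decide) (by decide)
  have ha2 : φ a2 = a2 :=
    φ.apply_eq_self_of_unique_common_adj h3 hv2 (by decide) (by decide) (by decide)
  have ha1 : φ a1 = a1 :=
    φ.apply_eq_self_of_unique_adj_ne h1 hb1 (by decide) (by decide) (by decide)
  have hb2 : φ b2 = b2 :=
    φ.apply_eq_self_of_unique_adj_ne hv2 ha2 (by decide) (by decide) (by decide)
  ext x
  cases x <;> assumption

theorem aut_cases : φ = 1 ∨ φ = sigmaAut ∨ φ = tauAut ∨ φ = sigmaAut * tauAut := by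
  have eq_of_involution (g : Gamma8 ≃g Gamma8) (hg : g * g = 1) (h1 : g (φ v1) = v1)
      (h3 : g (φ a3) = a3) : φ = g :=
    (eq_inv_of_mul_eq_one_right (aut_eq_one_of_fix_v1_a3 (g * φ) h1 h3)).trans
      (inv_eq_of_mul_eq_one_right hg)
  rcases aut_apply_eq_v1_or_eq_v2 φ (.inl rfl) with h1 | h1 <;>
    rcases aut_apply_eq_a3_or_eq_b3 φ (.inl rfl) with h3 | h3
  · exact .inl (eq_of_involution 1 (mul_one 1) h1 h3)
  · refine .inr <| .inl <| eq_of_involution sigmaAut ?_ (by rw [h1]; rfl) (by rw [h3]; rfl)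
    ext x; cases x <;> rfl
  · refine .inr <| .inr <| .inr <| eq_of_involution (sigmaAut * tauAut) ?_ (by rw [h1]; rfl)
      (by rw [h3]; rfl)
    ext x; cases x <;> rfl
  · refine .inr <| .inr <| .inl <| eq_of_involution tauAut ?_ (by rw [h1]; rfl) (by rw [h3]; rfl)
    ext x; cases x <;> rfl

theorem coe_aut_cases : ⇑φ = id ∨ ⇑φ = sigma8 ∨ ⇑φ = tau8 ∨ ⇑φ = sigma8 ∘ tau8 := by
  rcases aut_cases φ with rfl | rfl | rfl | rfl
  exacts [.inl rfl, .inr (.inl rfl), .inr (.inr (.inl rfl)), .inr (.inr (.inr rfl))]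

theorem aut_mul_self : φ * φ = 1 := by
  rcases aut_cases φ with rfl | rfl | rfl | rfl <;> ext x <;> cases x <;> rfl

end

theorem nat_card_aut : Nat.card (Gamma8 ≃g Gamma8) = 4 := by
  have hrange : Set.range (⇑· : Gamma8 ≃g Gamma8 → V8 → V8) =
      {id, sigma8, tau8, sigma8 ∘ tau8} := by
    ext f
    constructor
    · rintro ⟨φ, rfl⟩
      exact coe_aut_cases φ
    · rintro (rfl | rfl | rfl | rfl)
      exacts [⟨1, rfl⟩, ⟨sigmaAut, rfl⟩, ⟨tauAut, rfl⟩, ⟨sigmaAut * tauAut, rfl⟩]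
  rw [← Nat.card_range_of_injective DFunLike.coe_injective, hrange, Nat.card_eq_card_toFinset]
  decide

instance : IsKleinFour (Gamma8 ≃g Gamma8) where
  card_four := nat_card_aut
  exponent_two := by
    have : Nontrivial (Gamma8 ≃g Gamma8) := ⟨sigmaAut, 1, fun h => nomatch congr($h a1)⟩
    refine (Monoid.exponent_eq_prime_iff Nat.prime_two).2 fun g hg => orderOf_eq_prime ?_ hg
    rw [sq, aut_mul_self]

end Gamma8

/-- The graph `Γ₈` has exactly four graph automorphisms; its automorphism group is
isomorphic to the Klein four-group `ℤ/2 × ℤ/2`, generated by the involutions `σ` and `τ`. -/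
theorem Gamma8_automorphism_group :
    Nat.card (Gamma8 ≃g Gamma8) = 4 ∧
    (∃ σ' : Gamma8 ≃g Gamma8, ⇑σ' = sigma8) ∧
    (∃ τ' : Gamma8 ≃g Gamma8, ⇑τ' = tau8) ∧
    (∀ φ : Gamma8 ≃g Gamma8,
      ⇑φ = id ∨ ⇑φ = sigma8 ∨ ⇑φ = tau8 ∨ ⇑φ = sigma8 ∘ tau8) ∧
    Nonempty ((Gamma8 ≃g Gamma8) ≃* Multiplicative (ZMod 2 × ZMod 2)) :=
  ⟨IsKleinFour.card_four, ⟨Gamma8.sigmaAut, rfl⟩, ⟨Gamma8.tauAut, rfl⟩, Gamma8.coe_aut_cases,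
    IsKleinFour.nonempty_mulEquiv⟩
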